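/- Conversely, if C : ℝ → ℝ is convex, nonnegative, satisfies lim_{x→+∞} C(x) = 0 and lim_{x→−∞} (C(x)+x) = l for some real l, then there exists a unique integrable probability measure ν on ℝ with mean l whose integrated survival function equals C. -/

import Mathlib

/-!
The measure is the Stieltjes measure of the right derivative `C'₊` of `C`, i.e. its
distribution function is `1 + C'₊`. Convexity makes `C'₊` monotone and right-continuous, and
the asymptotes `C → 0` at `+∞` and `C x + x → l` at `-∞` force `C'₊` to increase from `-1`
to `0`, so the measure is a probability measure. By the layer-cake formula,
`∫_{[x,∞)} (y - x) dν = ∫_x^∞ ν(t,∞) dt`, and `ν(t,∞) = -C'₊(t)` integrates to `C x`; the same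
computation on `(-∞, 0]` with `1 + C'₊` bounds the negative part of `ν`. The mean is the limit
of `C_ν(x) + x = ∫ max y x dν` at `-∞`. For uniqueness, `C_ν(x - h) - C_ν(x)` lies between
`h ν[x,∞)` and `h ν[x-h,∞)`, so `C_ν` determines `ν[x,∞)`.
-/

open MeasureTheory Set Filter

noncomputable def meanM (μ : Measure ℝ) : ℝ := ∫ y, y ∂μ

noncomputable def rSupE (μ : Measure ℝ) : EReal :=
  sInf ((fun z : ℝ => (z : EReal)) '' {z : ℝ | μ (Ici z) = 0})

noncomputable def psiWds (μ : Measure ℝ) (x : ℝ) : EReal :=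
  if (x : EReal) < rSupE μ then
    ((((∫ y in Ici x, y ∂μ) - meanM μ) / (μ (Ici x)).toReal : ℝ) : EReal)
  else ⊤

noncomputable def Kfun (μ : Measure ℝ) (x : ℝ) : ℝ :=
  (∫ y in Ici x, (y - x) ∂μ) - meanM μ

open Topology

namespace ConvexOn

variable {f : ℝ → ℝ} (hf : ConvexOn ℝ univ f)
include hf

protected lemma continuous : Continuous f :=
  continuousOn_univ.mp (hf.continuousOn isOpen_univ)

lemma hasDerivWithinAt_rightDeriv (x : ℝ) :
    HasDerivWithinAt f (derivWithin f (Ioi x) x) (Ioi x) x :=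
  hf.hasDerivWithinAt_rightDeriv_of_mem_interior (by simp)

lemma monotone_rightDeriv : Monotone fun x ↦ derivWithin f (Ioi x) x := fun x y hxy ↦
  hf.monotoneOn_rightDeriv (by simp) (by simp) hxy

lemma rightDeriv_le_slope_of_univ {x y : ℝ} (hxy : x < y) :
    derivWithin f (Ioi x) x ≤ slope f x y :=
  hf.le_slope_of_hasDerivWithinAt_Ioi (mem_univ x) (mem_univ y) hxy
    (hf.hasDerivWithinAt_rightDeriv x)

lemma slope_le_rightDeriv_of_univ {x y : ℝ} (hxy : x < y) :
    slope f x y ≤ derivWithin f (Ioi y) y :=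
  (hf.slope_le_leftDeriv (mem_univ x) (mem_univ y) hxy
    (hf.differentiableWithinAt_Iio_of_mem_interior (by simp))).trans
    (hf.leftDeriv_le_rightDeriv_of_mem_interior (by simp))

lemma continuousWithinAt_rightDeriv (x : ℝ) :
    ContinuousWithinAt (fun y ↦ derivWithin f (Ioi y) y) (Ici x) x := by
  have hD := hf.monotone_rightDeriv
  rw [← continuousWithinAt_Ioi_iff_Ici, hD.continuousWithinAt_Ioi_iff_rightLim_eq]
  refine le_antisymm ?_ (hD.le_rightLim le_rfl)
  -- the right limit lies below every slope `slope f x z`, and these slopes tend to the derivative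
  have hslope : Tendsto (slope f x) (𝓝[>] x) (𝓝 (derivWithin f (Ioi x) x)) := by
    simpa using hasDerivWithinAt_iff_tendsto_slope.mp (hf.hasDerivWithinAt_rightDeriv x)
  refine ge_of_tendsto hslope ?_
  filter_upwards [self_mem_nhdsWithin] with z (hz : x < z)
  have hcont : ContinuousAt (fun y ↦ slope f y z) x := by
    simp only [slope_def_field]
    exact (continuousAt_const.sub hf.continuous.continuousAt).div
      (continuousAt_const.sub continuousAt_id) (sub_ne_zero.mpr hz.ne')
  refine ge_of_tendsto (hcont.tendsto.mono_left (nhdsWithin_le_nhds (s := Ioi x))) ?_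
  filter_upwards [Ioo_mem_nhdsGT hz] with y hy
  exact (hD.rightLim_le hy.1).trans (hf.rightDeriv_le_slope_of_univ hy.2)

lemma integral_rightDeriv {a b : ℝ} (hab : a ≤ b) :
    ∫ t in a..b, derivWithin f (Ioi t) t = f b - f a :=
  intervalIntegral.integral_eq_sub_of_hasDeriv_right_of_le hab hf.continuous.continuousOn
    (fun x _ ↦ hf.hasDerivWithinAt_rightDeriv x) hf.monotone_rightDeriv.intervalIntegrable

noncomputable def rightDerivStieltjes : StieltjesFunction ℝ where
  toFun x := derivWithin f (Ioi x) x
  mono' := hf.monotone_rightDeriv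
  right_continuous' := hf.continuousWithinAt_rightDeriv

@[simp]
lemma rightDerivStieltjes_apply (x : ℝ) :
    hf.rightDerivStieltjes x = derivWithin f (Ioi x) x :=
  rfl

section Asymptote

variable {L : Filter ℝ} {m c : ℝ}

lemma tendsto_rightDeriv_of_tendsto_sub_mul (hL : Tendsto (· + 1) L L)
    (hL' : Tendsto (· - 1) L L) (h : Tendsto (fun x ↦ f x - m * x) L (𝓝 c)) :
    Tendsto (fun x ↦ derivWithin f (Ioi x) x) L (𝓝 m) := by
  have hslope : ∀ x, slope f x (x + 1) = (f (x + 1) - m * (x + 1)) - (f x - m * x) + m := by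
    intro x
    simp only [slope_def_field, add_sub_cancel_left, div_one]
    ring
  have hupper : Tendsto (fun x ↦ slope f x (x + 1)) L (𝓝 m) := by
    simpa [hslope] using ((h.comp hL).sub h).add_const m
  have hlower : Tendsto (fun x ↦ slope f (x - 1) x) L (𝓝 m) :=
    (hupper.comp hL').congr fun x ↦ by simp
  exact tendsto_of_tendsto_of_tendsto_of_le_of_le hlower hupper
    (fun x ↦ hf.slope_le_rightDeriv_of_univ (sub_one_lt x))
    (fun x ↦ hf.rightDeriv_le_slope_of_univ (lt_add_one x))

lemma tendsto_rightDeriv_atTop (h : Tendsto (fun x ↦ f x - m * x) atTop (𝓝 c)) :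
    Tendsto (fun x ↦ derivWithin f (Ioi x) x) atTop (𝓝 m) :=
  hf.tendsto_rightDeriv_of_tendsto_sub_mul (tendsto_atTop_add_const_right _ 1 tendsto_id)
    (tendsto_atTop_add_const_right _ (-1) tendsto_id) h

lemma tendsto_rightDeriv_atBot (h : Tendsto (fun x ↦ f x - m * x) atBot (𝓝 c)) :
    Tendsto (fun x ↦ derivWithin f (Ioi x) x) atBot (𝓝 m) :=
  hf.tendsto_rightDeriv_of_tendsto_sub_mul (tendsto_atBot_add_const_right _ 1 tendsto_id)
    (tendsto_atBot_add_const_right _ (-1) tendsto_id) h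

lemma lintegral_Ioi_ofReal_sub_rightDeriv (h : Tendsto (fun x ↦ f x - m * x) atTop (𝓝 c))
    (a : ℝ) : ∫⁻ t in Ioi a, ENNReal.ofReal (m - derivWithin f (Ioi t) t) =
      ENNReal.ofReal (f a - m * a - c) := by
  have hD := hf.monotone_rightDeriv
  have hIoc : ∀ b, a ≤ b → ∫⁻ t in Ioc a b, ENNReal.ofReal (m - derivWithin f (Ioi t) t) =
      ENNReal.ofReal (f a - m * a - (f b - m * b)) := by
    intro b hab
    rw [← ofReal_integral_eq_lintegral_ofReal
      (intervalIntegrable_const.sub hD.intervalIntegrable (a := a) (b := b)).1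
      (ae_of_all _ fun t ↦ sub_nonneg.mpr <| hD.ge_of_tendsto (hf.tendsto_rightDeriv_atTop h) t),
      ← intervalIntegral.integral_of_le hab, intervalIntegral.integral_sub intervalIntegrable_const
      hD.intervalIntegrable, hf.integral_rightDeriv hab]
    simp only [intervalIntegral.integral_const, smul_eq_mul]
    congr 1
    ring
  refine (aecover_Iic (μ := volume.restrict (Ioi a)) tendsto_id).lintegral_eq_of_tendsto _
    (measurable_const.sub hD.measurable).ennreal_ofReal.aemeasurable ?_
  simp_rw [Measure.restrict_restrict measurableSet_Iic, Iic_inter_Ioi]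
  refine Tendsto.congr' (eventually_ge_atTop a |>.mono fun b hab ↦ (hIoc b hab).symm) ?_
  exact ENNReal.tendsto_ofReal (tendsto_const_nhds.sub h)

lemma lintegral_Iic_ofReal_rightDeriv_sub (h : Tendsto (fun x ↦ f x - m * x) atBot (𝓝 c))
    (a : ℝ) : ∫⁻ t in Iic a, ENNReal.ofReal (derivWithin f (Ioi t) t - m) =
      ENNReal.ofReal (f a - m * a - c) := by
  have hD := hf.monotone_rightDeriv
  have hIoc : ∀ b, b ≤ a → ∫⁻ t in Ioc b a, ENNReal.ofReal (derivWithin f (Ioi t) t - m) =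
      ENNReal.ofReal (f a - m * a - (f b - m * b)) := by
    intro b hba
    rw [← ofReal_integral_eq_lintegral_ofReal
      (hD.intervalIntegrable.sub intervalIntegrable_const (a := b) (b := a)).1
      (ae_of_all _ fun t ↦ sub_nonneg.mpr (hD.le_of_tendsto (hf.tendsto_rightDeriv_atBot h) t)),
      ← intervalIntegral.integral_of_le hba, intervalIntegral.integral_sub hD.intervalIntegrable
      intervalIntegrable_const, hf.integral_rightDeriv hba]
    simp only [intervalIntegral.integral_const, smul_eq_mul]
    congr 1
    ring
  refine (aecover_Ioi (μ := volume.restrict (Iic a)) tendsto_id).lintegral_eq_of_tendsto _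
    (hD.measurable.sub measurable_const).ennreal_ofReal.aemeasurable ?_
  simp_rw [Measure.restrict_restrict measurableSet_Ioi, Ioi_inter_Iic]
  refine Tendsto.congr' (eventually_le_atBot a |>.mono fun b hba ↦ (hIoc b hba).symm) ?_
  exact ENNReal.tendsto_ofReal (tendsto_const_nhds.sub h)

end Asymptote

end ConvexOn

lemma lintegral_ofReal_sub_eq_setLIntegral_measure_Ioi (μ : Measure ℝ) (x : ℝ) :
    ∫⁻ y, ENNReal.ofReal (y - x) ∂μ = ∫⁻ t in Ioi x, μ (Ioi t) := by
  have hmax : ∀ y, ENNReal.ofReal (y - x) = ENNReal.ofReal (max (y - x) 0) := fun y ↦ by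
    simp [ENNReal.ofReal_max]
  simp_rw [hmax]
  rw [lintegral_eq_lintegral_meas_lt μ (f := fun y ↦ max (y - x) 0)
    (ae_of_all _ fun y ↦ le_max_right _ _) (by fun_prop)]
  have hset : ∀ t > (0 : ℝ), {y | t < max (y - x) 0} = Ioi (x + t) := fun t ht ↦ by
    ext y
    simp only [mem_ofPred_eq, lt_max_iff, mem_Ioi, ht.not_gt, or_false]
    constructor <;> intro h <;> linarith
  rw [setLIntegral_congr_fun measurableSet_Ioi fun t ht ↦ by rw [hset t ht],
    (measurePreserving_add_left volume x).setLIntegral_comp_emb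
      (MeasurableEquiv.addLeft x).measurableEmbedding (fun t ↦ μ (Ioi t)), image_const_add_Ioi,
    add_zero]

lemma lintegral_ofReal_sub_eq_setLIntegral_measure_Iio (μ : Measure ℝ) (x : ℝ) :
    ∫⁻ y, ENNReal.ofReal (x - y) ∂μ = ∫⁻ t in Iio x, μ (Iio t) := by
  have hmax : ∀ y, ENNReal.ofReal (x - y) = ENNReal.ofReal (max (x - y) 0) := fun y ↦ by
    simp [ENNReal.ofReal_max]
  simp_rw [hmax]
  rw [lintegral_eq_lintegral_meas_lt μ (f := fun y ↦ max (x - y) 0)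
    (ae_of_all _ fun y ↦ le_max_right _ _) (by fun_prop)]
  have hset : ∀ t > (0 : ℝ), {y | t < max (x - y) 0} = Iio (x - t) := fun t ht ↦ by
    ext y
    simp only [mem_ofPred_eq, lt_max_iff, mem_Iio, ht.not_gt, or_false]
    constructor <;> intro h <;> linarith
  rw [setLIntegral_congr_fun measurableSet_Ioi fun t ht ↦ by rw [hset t ht],
    (volume.measurePreserving_sub_left x).setLIntegral_comp_emb
      (MeasurableEquiv.subLeft x).measurableEmbedding (fun t ↦ μ (Iio t)), image_const_sub_Ioi,
    sub_zero]

lemma MeasureTheory.Integrable.of_lintegral_ofReal_lt_top {α : Type*} [MeasurableSpace α]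
    {μ : Measure α} {f : α → ℝ} (hf : AEStronglyMeasurable f μ)
    (hpos : ∫⁻ a, ENNReal.ofReal (f a) ∂μ < ⊤) (hneg : ∫⁻ a, ENNReal.ofReal (-f a) ∂μ < ⊤) :
    Integrable f μ := by
  have hmax : ∀ g : α → ℝ, AEStronglyMeasurable g μ → ∫⁻ a, ENNReal.ofReal (g a) ∂μ < ⊤ →
      Integrable (fun a ↦ max (g a) 0) μ := fun g hg hlt ↦
    ⟨hg.sup aestronglyMeasurable_const, (hasFiniteIntegral_iff_ofReal
      (ae_of_all _ fun _ ↦ le_max_right _ _)).mpr (by simpa [ENNReal.ofReal_max] using hlt)⟩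
  exact ((hmax f hf hpos).sub (hmax _ hf.neg hneg)).congr
    (ae_of_all _ fun a ↦ max_zero_sub_max_neg_zero_eq_self (f a))

lemma MeasureTheory.Integrable.max_sub_const_zero {μ : Measure ℝ} [IsFiniteMeasure μ]
    (hμ : Integrable (fun y : ℝ ↦ y) μ) (x : ℝ) : Integrable (fun y ↦ max (y - x) 0) μ :=
  (hμ.sub (integrable_const x)).pos_part

noncomputable def integratedSurvival (μ : Measure ℝ) (x : ℝ) : ℝ := ∫ y in Ici x, (y - x) ∂μ

section IntegratedSurvival

variable {μ : Measure ℝ}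

lemma integratedSurvival_eq_integral_max (μ : Measure ℝ) (x : ℝ) :
    integratedSurvival μ x = ∫ y, max (y - x) 0 ∂μ := by
  rw [integratedSurvival, ← setIntegral_eq_integral_of_forall_compl_eq_zero
    fun y hy ↦ max_eq_right (sub_nonpos.mpr (not_le.mp hy).le)]
  exact setIntegral_congr_fun measurableSet_Ici fun y hy ↦
    (max_eq_left (sub_nonneg.mpr hy)).symm

lemma integratedSurvival_eq_toReal_lintegral (μ : Measure ℝ) (x : ℝ) :
    integratedSurvival μ x = (∫⁻ y, ENNReal.ofReal (y - x) ∂μ).toReal := by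
  rw [integratedSurvival_eq_integral_max,
    integral_eq_lintegral_of_nonneg_ae (f := fun y ↦ max (y - x) 0)
      (ae_of_all _ fun y ↦ le_max_right _ _) (by fun_prop)]
  simp [ENNReal.ofReal_max]

lemma integratedSurvival_sub_mem_Icc [IsFiniteMeasure μ] (hμ : Integrable (fun y : ℝ ↦ y) μ)
    {a b : ℝ} (hab : a ≤ b) :
    integratedSurvival μ a - integratedSurvival μ b ∈
      Icc ((b - a) * μ.real (Ici b)) ((b - a) * μ.real (Ici a)) := by
  have hint := hμ.max_sub_const_zero
  rw [integratedSurvival_eq_integral_max, integratedSurvival_eq_integral_max,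
    ← integral_sub (hint a) (hint b)]
  have hlow : ∀ y, (Ici b).indicator (fun _ ↦ b - a) y ≤ max (y - a) 0 - max (y - b) 0 := by
    intro y
    simp only [indicator_apply, mem_Ici]
    split_ifs <;> grind
  have hup : ∀ y, max (y - a) 0 - max (y - b) 0 ≤ (Ici a).indicator (fun _ ↦ b - a) y := by
    intro y
    simp only [indicator_apply, mem_Ici]
    split_ifs <;> grind
  constructor
  · calc (b - a) * μ.real (Ici b) = ∫ y, (Ici b).indicator (fun _ ↦ b - a) y ∂μ := by
          rw [integral_indicator_const _ measurableSet_Ici, smul_eq_mul, mul_comm]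
      _ ≤ _ := integral_mono ((integrable_const _).indicator measurableSet_Ici)
          ((hint a).sub (hint b)) hlow
  · calc _ ≤ ∫ y, (Ici a).indicator (fun _ ↦ b - a) y ∂μ :=
          integral_mono ((hint a).sub (hint b)) ((integrable_const _).indicator measurableSet_Ici) hup
      _ = (b - a) * μ.real (Ici a) := by
          rw [integral_indicator_const _ measurableSet_Ici, smul_eq_mul, mul_comm]

lemma measureReal_Ici_le_of_integratedSurvival_eq {ν : Measure ℝ} [IsFiniteMeasure μ]
    [IsFiniteMeasure ν]
    (hμ : Integrable (fun y : ℝ ↦ y) μ) (hν : Integrable (fun y : ℝ ↦ y) ν)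
    (h : ∀ x, integratedSurvival μ x = integratedSurvival ν x) (x : ℝ) :
    μ.real (Ici x) ≤ ν.real (Ici x) := by
  have hle : ∀ r > 0, μ.real (Ici x) ≤ ν.real (Ici (x - r)) := by
    intro r hr
    have hμr := (integratedSurvival_sub_mem_Icc hμ (sub_le_self x hr.le)).1
    have hνr := (integratedSurvival_sub_mem_Icc hν (sub_le_self x hr.le)).2
    rw [h, h, sub_sub_cancel] at hμr
    rw [sub_sub_cancel] at hνr
    exact le_of_mul_le_mul_left (hμr.trans hνr) hr
  have hInter : ⋂ r > (0 : ℝ), Ici (x - r) = Ici x := by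
    ext y
    simp only [mem_iInter, mem_Ici]
    exact ⟨fun hy ↦ le_of_forall_pos_le_add fun r hr ↦ by linarith [hy r hr],
      fun hy r hr ↦ by linarith⟩
  have hlim : Tendsto (fun r ↦ ν.real (Ici (x - r))) (𝓝[>] 0) (𝓝 (ν.real (Ici x))) := by
    have := tendsto_measure_biInter_gt (μ := ν) (s := fun r ↦ Ici (x - r)) (a := 0)
      (fun r _ ↦ measurableSet_Ici.nullMeasurableSet)
      (fun r r' _ hrr' ↦ Ici_subset_Ici.mpr (by linarith)) ⟨1, one_pos, measure_ne_top _ _⟩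
    rw [hInter] at this
    exact (ENNReal.tendsto_toReal (measure_ne_top _ _)).comp this
  exact ge_of_tendsto hlim (eventually_nhdsWithin_of_forall hle)

lemma MeasureTheory.Measure.ext_of_integratedSurvival {ν : Measure ℝ} [IsFiniteMeasure μ]
    [IsFiniteMeasure ν]
    (hμ : Integrable (fun y : ℝ ↦ y) μ) (hν : Integrable (fun y : ℝ ↦ y) ν)
    (h : ∀ x, integratedSurvival μ x = integratedSurvival ν x) : μ = ν :=
  Measure.ext_of_Ici μ ν fun x ↦
    (ENNReal.toReal_eq_toReal_iff' (measure_ne_top _ _) (measure_ne_top _ _)).mp <| le_antisymm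
      (measureReal_Ici_le_of_integratedSurvival_eq hμ hν h x)
      (measureReal_Ici_le_of_integratedSurvival_eq hν hμ (fun x ↦ (h x).symm) x)

lemma tendsto_integratedSurvival_add_atBot [IsProbabilityMeasure μ]
    (hμ : Integrable (fun y : ℝ ↦ y) μ) :
    Tendsto (fun x ↦ integratedSurvival μ x + x) atBot (𝓝 (∫ y, y ∂μ)) := by
  have heq : ∀ x, integratedSurvival μ x + x = ∫ y, max y x ∂μ := by
    intro x
    rw [integratedSurvival_eq_integral_max]
    calc (∫ y, max (y - x) 0 ∂μ) + x = ∫ y, (max (y - x) 0 + x) ∂μ := by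
          rw [integral_add (hμ.max_sub_const_zero x) (integrable_const x), integral_const,
            probReal_univ, one_smul]
      _ = ∫ y, max y x ∂μ := by simp_rw [← max_add_add_right, sub_add_cancel, zero_add]
  simp_rw [heq]
  refine tendsto_integral_filter_of_dominated_convergence (fun y ↦ |y|)
    (Eventually.of_forall fun x ↦ by fun_prop) ?_ hμ.abs (ae_of_all _ fun y ↦ ?_)
  · filter_upwards [eventually_le_atBot 0] with x hx
    exact ae_of_all _ fun y ↦ by simp only [Real.norm_eq_abs]; grind
  · exact tendsto_const_nhds.congr' <|
      (eventually_le_atBot y).mono fun x hx ↦ (max_eq_left hx).symm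

end IntegratedSurvival

namespace ConvexOn

variable {f : ℝ → ℝ} (hf : ConvexOn ℝ univ f)
include hf

lemma isProbabilityMeasure_rightDerivStieltjes {c l : ℝ} (htop : Tendsto f atTop (𝓝 c))
    (hbot : Tendsto (fun x ↦ f x + x) atBot (𝓝 l)) :
    IsProbabilityMeasure hf.rightDerivStieltjes.measure := by
  constructor
  rw [hf.rightDerivStieltjes.measure_univ
    (hf.tendsto_rightDeriv_atBot (m := -1) (by simpa using hbot))
    (hf.tendsto_rightDeriv_atTop (m := 0) (by simpa using htop))]
  norm_num

lemma lintegral_ofReal_sub_rightDerivStieltjes {c : ℝ} (htop : Tendsto f atTop (𝓝 c)) (x : ℝ) :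
    ∫⁻ y, ENNReal.ofReal (y - x) ∂hf.rightDerivStieltjes.measure =
      ENNReal.ofReal (f x - c) := by
  have htop' : Tendsto (fun x ↦ f x - 0 * x) atTop (𝓝 c) := by simpa using htop
  rw [lintegral_ofReal_sub_eq_setLIntegral_measure_Ioi]
  simp_rw [hf.rightDerivStieltjes.measure_Ioi (hf.tendsto_rightDeriv_atTop htop'),
    rightDerivStieltjes_apply]
  simpa using hf.lintegral_Ioi_ofReal_sub_rightDeriv htop' x

lemma integratedSurvival_rightDerivStieltjes (hnonneg : ∀ x, 0 ≤ f x)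
    (htop : Tendsto f atTop (𝓝 0)) (x : ℝ) :
    integratedSurvival hf.rightDerivStieltjes.measure x = f x := by
  rw [integratedSurvival_eq_toReal_lintegral, hf.lintegral_ofReal_sub_rightDerivStieltjes htop,
    sub_zero, ENNReal.toReal_ofReal (hnonneg x)]

lemma integrable_id_rightDerivStieltjes {c l : ℝ} (htop : Tendsto f atTop (𝓝 c))
    (hbot : Tendsto (fun x ↦ f x + x) atBot (𝓝 l)) :
    Integrable (fun y ↦ y) hf.rightDerivStieltjes.measure := by
  have hbot' : Tendsto (fun x ↦ f x - -1 * x) atBot (𝓝 l) := by simpa using hbot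
  refine .of_lintegral_ofReal_lt_top (by fun_prop) ?_ ?_
  · simpa using
      (hf.lintegral_ofReal_sub_rightDerivStieltjes htop 0).trans_lt ENNReal.ofReal_lt_top
  · calc ∫⁻ y, ENNReal.ofReal (-y) ∂hf.rightDerivStieltjes.measure
          = ∫⁻ t in Iio 0, hf.rightDerivStieltjes.measure (Iio t) := by
          simpa using lintegral_ofReal_sub_eq_setLIntegral_measure_Iio _ 0
      _ ≤ ∫⁻ t in Iic 0, hf.rightDerivStieltjes.measure (Iic t) :=
          lintegral_mono' (Measure.restrict_mono Iio_subset_Iic_self le_rfl) fun t ↦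
            measure_mono Iio_subset_Iic_self
      _ = ENNReal.ofReal (f 0 - -1 * 0 - l) := by
          simp_rw [hf.rightDerivStieltjes.measure_Iic (hf.tendsto_rightDeriv_atBot hbot'),
            rightDerivStieltjes_apply]
          exact hf.lintegral_Iic_ofReal_rightDeriv_sub hbot' 0
      _ < ⊤ := ENNReal.ofReal_lt_top

end ConvexOn

theorem stmt5 (C : ℝ → ℝ) (l : ℝ)
    (hconv : ConvexOn ℝ univ C)
    (hnonneg : ∀ x, 0 ≤ C x)
    (htop : Tendsto C atTop (nhds 0))
    (hbot : Tendsto (fun x => C x + x) atBot (nhds l)) :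
    ∃! ν : Measure ℝ, IsProbabilityMeasure ν ∧ Integrable (fun y : ℝ => y) ν ∧
      (∫ y, y ∂ν) = l ∧ ∀ x, (∫ y in Ici x, (y - x) ∂ν) = C x := by
  have hprob := hconv.isProbabilityMeasure_rightDerivStieltjes htop hbot
  have hint := hconv.integrable_id_rightDerivStieltjes htop hbot
  have hsurv := hconv.integratedSurvival_rightDerivStieltjes hnonneg htop
  refine ⟨hconv.rightDerivStieltjes.measure, ⟨hprob, hint, ?_, hsurv⟩, ?_⟩
  · have hmean := tendsto_integratedSurvival_add_atBot hint
    simp_rw [hsurv] at hmean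
    exact tendsto_nhds_unique hmean hbot
  · rintro μ ⟨hμ, hμint, -, hμsurv⟩
    exact Measure.ext_of_integratedSurvival hμint hint fun x ↦ (hμsurv x).trans (hsurv x).symm
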